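/- arXiv:1812.05565 — 3 statements merged into one kernel-verified Lean document; each statement's English description precedes it below -/
import Mathlib

section
/- Let M be a symmetric n×n real matrix, a ∈ ℝ^n a nonzero vector, and γ > 0 such that ‖M − a aᵀ‖_spec ≤ ‖M‖_spec − γ‖a‖². Then any unit eigenvector u of M corresponding to an eigenvalue of maximal absolute value satisfies ⟨u, a/‖a‖⟩² ≥ γ. -/
/-!
Write `c = ⟪u, a⟫`. On the unit eigenvector `u` the quadratic form of `M - a aᵀ` equals `μ - c²`,
so `|μ| - c² ≤ |μ - c²| ≤ ‖M - a aᵀ‖ ≤ |μ| - γ‖a‖²`, i.e. `γ‖a‖² ≤ c²`.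
-/

open scoped RealInnerProductSpace

/-- The spectral norm (operator 2-norm) of a real square matrix. -/
noncomputable def specNorm {n : ℕ} (M : Matrix (Fin n) (Fin n) ℝ) : ℝ :=
  ‖LinearMap.toContinuousLinearMap (Matrix.toEuclideanLin M)‖

theorem abs_inner_self_apply_le_opNorm {E : Type*} [NormedAddCommGroup E] [InnerProductSpace ℝ E]
    (T : E →L[ℝ] E) (x : E) : |⟪x, T x⟫| ≤ ‖T‖ * ‖x‖ ^ 2 :=
  calc |⟪x, T x⟫| ≤ ‖x‖ * ‖T x‖ := abs_real_inner_le_norm _ _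
    _ ≤ ‖x‖ * (‖T‖ * ‖x‖) := by gcongr; exact T.le_opNorm x
    _ = ‖T‖ * ‖x‖ ^ 2 := by ring

namespace Matrix

variable {ι : Type*} [Fintype ι] [DecidableEq ι]

theorem inner_toEuclideanLin_self_of_mulVec_eq_smul {A : Matrix ι ι ℝ} {u : EuclideanSpace ℝ ι}
    {μ : ℝ} (h : A *ᵥ u = μ • (u : ι → ℝ)) : ⟪u, toEuclideanLin A u⟫ = μ * ‖u‖ ^ 2 := by
  rw [toLpLin_apply, h, WithLp.toLp_smul, WithLp.toLp_ofLp, real_inner_smul_right,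
    real_inner_self_eq_norm_sq]

theorem toEuclideanLin_vecMulVec_self_apply (a u : EuclideanSpace ℝ ι) :
    toEuclideanLin (vecMulVec a a) u = ⟪a, u⟫ • a := by
  rw [toLpLin_apply, vecMulVec_mulVec, EuclideanSpace.inner_eq_star_dotProduct]
  simp [dotProduct_comm]

theorem inner_toEuclideanLin_sub_vecMulVec_self (A : Matrix ι ι ℝ) (a u : EuclideanSpace ℝ ι) :
    ⟪u, toEuclideanLin (A - vecMulVec a a) u⟫ = ⟪u, toEuclideanLin A u⟫ - ⟪u, a⟫ ^ 2 := by
  rw [map_sub, LinearMap.sub_apply, inner_sub_right, toEuclideanLin_vecMulVec_self_apply,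
    real_inner_smul_right, real_inner_comm a, sq]

end Matrix

theorem abs_inner_toEuclideanLin_self_le_specNorm {n : ℕ} (A : Matrix (Fin n) (Fin n) ℝ)
    (u : EuclideanSpace ℝ (Fin n)) : |⟪u, Matrix.toEuclideanLin A u⟫| ≤ specNorm A * ‖u‖ ^ 2 :=
  abs_inner_self_apply_le_opNorm (LinearMap.toContinuousLinearMap (Matrix.toEuclideanLin A)) u

theorem eigenvector_of_gapped_matrix_general {n : ℕ} (M : Matrix (Fin n) (Fin n) ℝ)
    (a : EuclideanSpace ℝ (Fin n)) (ha : a ≠ 0) (γ : ℝ)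
    (hgap : specNorm (M - Matrix.vecMulVec a a) ≤ specNorm M - γ * ‖a‖ ^ 2)
    (u : EuclideanSpace ℝ (Fin n)) (hu : ‖u‖ = 1) (μ : ℝ)
    (heig : M.mulVec u = μ • (u : Fin n → ℝ)) (htop : |μ| = specNorm M) :
    γ ≤ ⟪u, (‖a‖⁻¹ • a : EuclideanSpace ℝ (Fin n))⟫ ^ 2 := by
  have hquad : ⟪u, Matrix.toEuclideanLin (M - Matrix.vecMulVec a a) u⟫ = μ - ⟪u, a⟫ ^ 2 := by
    rw [Matrix.inner_toEuclideanLin_sub_vecMulVec_self,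
      Matrix.inner_toEuclideanLin_self_of_mulVec_eq_smul heig, hu, one_pow, mul_one]
  have hbound := abs_inner_toEuclideanLin_self_le_specNorm (M - Matrix.vecMulVec a a) u
  rw [hquad, hu, one_pow, mul_one] at hbound
  have hsq : γ * ‖a‖ ^ 2 ≤ ⟪u, a⟫ ^ 2 := by
    linarith [abs_sub_abs_le_abs_sub μ (⟪u, a⟫ ^ 2), abs_of_nonneg (sq_nonneg ⟪u, a⟫)]
  rw [real_inner_smul_right, mul_pow, inv_pow]
  exact (le_inv_mul_iff₀ (pow_pos (norm_pos_iff.mpr ha) 2)).mpr (by linarith)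

/-- Eigenvectors of gapped matrices: if `M` is symmetric, `a ≠ 0`, `γ > 0` and
`‖M − a aᵀ‖_spec ≤ ‖M‖_spec − γ‖a‖²`, then any unit eigenvector `u` of `M` whose
eigenvalue has maximal absolute value satisfies `⟨u, a/‖a‖⟩² ≥ γ`. -/
theorem eigenvector_of_gapped_matrix {n : ℕ} (M : Matrix (Fin n) (Fin n) ℝ)
    (hM : M.IsSymm) (a : EuclideanSpace ℝ (Fin n)) (ha : a ≠ 0) (γ : ℝ) (hγ : 0 < γ)
    (hgap : specNorm (M - Matrix.vecMulVec a a) ≤ specNorm M - γ * ‖a‖ ^ 2)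
    (u : EuclideanSpace ℝ (Fin n)) (hu : ‖u‖ = 1) (μ : ℝ)
    (heig : M.mulVec u = μ • (u : Fin n → ℝ)) (htop : |μ| = specNorm M) :
    γ ≤ ⟪u, (‖a‖⁻¹ • a : EuclideanSpace ℝ (Fin n))⟫ ^ 2 :=
  eigenvector_of_gapped_matrix_general M a ha γ hgap u hu μ heig htop
end

section
/- Two probability measures μ and ν on ℝ^n, both supported on finitely many points, are equal if and only if ∫ p dμ = ∫ p dν for all polynomials p of degree at most 2m, where m is the cardinality of the support of μ. -/
open MeasureTheory MvPolynomial

lemma FSM.integral_eq {n : ℕ} (μ : Measure (Fin n → ℝ)) [IsFiniteMeasure μ]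
    (s : Finset (Fin n → ℝ)) (h : μ (↑s)ᶜ = 0) (f : (Fin n → ℝ) → ℝ) :
    ∫ x, f x ∂μ = ∑ x ∈ s, (μ {x}).toReal * f x := by
  have hres : μ.restrict ↑s = μ := by
    apply Measure.restrict_eq_self_of_ae_mem
    rw [MeasureTheory.ae_iff]
    exact h
  rw [← hres, integral_finset _ _, hres]
  simp [smul_eq_mul, Measure.real]
  exact IntegrableOn.finset

lemma FSM.measure_finset_eq {α : Type*} [MeasurableSpace α] [MeasurableSingletonClass α]
    (ρ : Measure α) (F : Finset α) : ρ ↑F = ∑ x ∈ F, ρ {x} := by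
  rw [← Set.biUnion_of_singleton (↑F : Set α), Finset.set_biUnion_coe,
    measure_biUnion_finset (fun x _ y _ hxy => by simpa using hxy)
      (fun x _ => measurableSet_singleton x)]

lemma FSM.meas_eq {α : Type*} [MeasurableSpace α] [MeasurableSingletonClass α]
    (μ ν : Measure α) (u : Finset α) (hμ : μ (↑u)ᶜ = 0) (hν : ν (↑u)ᶜ = 0)
    (h : ∀ x ∈ u, μ {x} = ν {x}) : μ = ν := by
  classical
  ext A hA
  have key : ∀ ρ : Measure α, ρ (↑u)ᶜ = 0 → ρ A = ∑ x ∈ u.filter (· ∈ A), ρ {x} := by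
    intro ρ hρ
    have h1 : ρ A = ρ (A ∩ ↑u) := by
      have h3 := measure_inter_add_diff (μ := ρ) A u.measurableSet
      have h2 : ρ (A \ ↑u) = 0 :=
        measure_mono_null (Set.diff_subset_compl A ↑u) hρ
      rw [← h3, h2, add_zero]
    have h2 : (A ∩ ↑u) = ↑(u.filter (· ∈ A)) := by
      ext x; simp [and_comm]
    rw [h1, h2, FSM.measure_finset_eq]
  rw [key μ hμ, key ν hν]
  exact Finset.sum_congr rfl fun x hx => h x (Finset.mem_filter.1 hx).1

noncomputable def FSM.q {n : ℕ} (a : Fin n → ℝ) : MvPolynomial (Fin n) ℝ :=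
  ∑ i, (X i - C (a i)) ^ 2

lemma FSM.eval_q {n : ℕ} (a y : Fin n → ℝ) :
    eval y (FSM.q a) = ∑ i, (y i - a i) ^ 2 := by
  simp [FSM.q]

lemma FSM.eval_q_nonneg {n : ℕ} (a y : Fin n → ℝ) : 0 ≤ eval y (FSM.q a) := by
  rw [FSM.eval_q]; exact Finset.sum_nonneg fun i _ => sq_nonneg _

lemma FSM.eval_q_self {n : ℕ} (a : Fin n → ℝ) : eval a (FSM.q a) = 0 := by
  simp [FSM.eval_q]

lemma FSM.eval_q_pos {n : ℕ} (a y : Fin n → ℝ) (h : y ≠ a) : 0 < eval y (FSM.q a) := by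
  rw [FSM.eval_q]
  obtain ⟨i, hi⟩ : ∃ i, y i ≠ a i := by
    by_contra hc; push_neg at hc; exact h (funext hc)
  exact Finset.sum_pos' (fun j _ => sq_nonneg _)
    ⟨i, Finset.mem_univ i, by have := sub_ne_zero.mpr hi; positivity⟩

lemma FSM.totalDegree_q {n : ℕ} (a : Fin n → ℝ) : (FSM.q a).totalDegree ≤ 2 := by
  refine totalDegree_finsetSum_le fun i _ => ?_
  calc ((X i - C (a i)) ^ 2).totalDegree ≤ 2 * (X i - C (a i)).totalDegree :=
        totalDegree_pow _ _
    _ ≤ 2 * 1 := by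
        refine Nat.mul_le_mul_left 2 ?_
        refine (totalDegree_sub _ _).trans (max_le ?_ ?_)
        · exact (totalDegree_X i).le
        · simp [totalDegree_C]
    _ = 2 := rfl

lemma FSM.totalDegree_prod_q {n : ℕ} (F : Finset (Fin n → ℝ)) :
    (∏ a ∈ F, FSM.q a).totalDegree ≤ 2 * F.card := by
  refine (totalDegree_finset_prod _ _).trans ?_
  calc ∑ a ∈ F, (FSM.q a).totalDegree ≤ ∑ _a ∈ F, 2 :=
        Finset.sum_le_sum fun a _ => FSM.totalDegree_q a
    _ = 2 * F.card := by rw [Finset.sum_const, smul_eq_mul, mul_comm]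

/-- Two finitely supported probability measures on `ℝⁿ` are equal iff they agree
on integrals of all polynomials of degree at most `2m`, where `m` is the number
of points in the support of `μ`. -/
theorem finitely_supported_measures_eq_iff_moments (n : ℕ)
    (μ ν : Measure (Fin n → ℝ)) [IsProbabilityMeasure μ] [IsProbabilityMeasure ν]
    (s : Finset (Fin n → ℝ)) (hμs : μ (↑s)ᶜ = 0) (hs : ∀ x ∈ s, μ {x} ≠ 0)
    (t : Finset (Fin n → ℝ)) (hνt : ν (↑t)ᶜ = 0) :
    μ = ν ↔
      ∀ p : MvPolynomial (Fin n) ℝ, p.totalDegree ≤ 2 * s.card →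
        ∫ x, MvPolynomial.eval x p ∂μ = ∫ x, MvPolynomial.eval x p ∂ν := by
  classical
  constructor
  · rintro rfl
    intro p _
    rfl
  · intro hmom
    set P : MvPolynomial (Fin n) ℝ := ∏ a ∈ s, FSM.q a with hP
    have hPμ : ∫ x, eval x P ∂μ = 0 := by
      rw [FSM.integral_eq μ s hμs]
      refine Finset.sum_eq_zero fun x hx => ?_
      have hzP : eval x P = 0 := by
        rw [hP, map_prod]
        exact Finset.prod_eq_zero hx (FSM.eval_q_self x)
      rw [hzP, mul_zero]
    have hPν : ∑ z ∈ t, (ν {z}).toReal * eval z P = 0 := by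
      rw [← FSM.integral_eq ν t hνt, ← hmom P (FSM.totalDegree_prod_q s), hPμ]
    have hν0 : ∀ y, y ∉ s → ν {y} = 0 := by
      intro y hy
      by_cases hyt : y ∈ t
      · have hterm : ∀ z ∈ t, 0 ≤ (ν {z}).toReal * eval z P := fun z _ =>
          mul_nonneg ENNReal.toReal_nonneg (by
            rw [hP, map_prod]
            exact Finset.prod_nonneg fun a _ => FSM.eval_q_nonneg a z)
        have hy0 := (Finset.sum_eq_zero_iff_of_nonneg hterm).1 hPν y hyt
        have hPy : 0 < eval y P := by
          rw [hP, map_prod]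
          exact Finset.prod_pos fun a ha => FSM.eval_q_pos a y (fun he => hy (he ▸ ha))
        have htr : (ν {y}).toReal = 0 := by
          rcases mul_eq_zero.1 hy0 with h | h
          · exact h
          · exact absurd h hPy.ne'
        exact ((ENNReal.toReal_eq_zero_iff _).1 htr).resolve_right (measure_ne_top ν _)
      · exact measure_mono_null (by intro z hz; simp_all) hνt
    have hνs : ν (↑s)ᶜ = 0 := by
      have hsub : ((↑s)ᶜ : Set (Fin n → ℝ)) ⊆ (↑t)ᶜ ∪ ↑(t.filter (· ∉ s)) := by
        intro x hx
        by_cases hxt : x ∈ t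
        · right; simp only [Finset.coe_filter, Set.mem_setOf_eq]; exact ⟨hxt, hx⟩
        · left; simpa using hxt
      refine measure_mono_null hsub (measure_union_null hνt ?_)
      rw [FSM.measure_finset_eq]
      exact Finset.sum_eq_zero fun x hx => hν0 x (Finset.mem_filter.1 hx).2
    have hkey : ∀ x ∈ s, μ {x} = ν {x} := by
      intro x hx
      set c : ℝ := ∏ a ∈ s.erase x, eval x (FSM.q a) with hcdef
      have hc : 0 < c :=
        Finset.prod_pos fun a ha =>
          FSM.eval_q_pos a x (fun he => (Finset.mem_erase.1 ha).1 he.symm)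
      set I : MvPolynomial (Fin n) ℝ := C c⁻¹ * ∏ a ∈ s.erase x, FSM.q a with hIdef
      have hIdeg : I.totalDegree ≤ 2 * s.card := by
        refine (totalDegree_mul _ _).trans ?_
        rw [totalDegree_C, zero_add]
        refine (FSM.totalDegree_prod_q _).trans ?_
        have hcard := Finset.card_erase_le (a := x) (s := s)
        omega
      have hIx : eval x I = 1 := by
        rw [hIdef, map_mul, eval_C, map_prod, ← hcdef]
        exact inv_mul_cancel₀ hc.ne'
      have hIz : ∀ z ∈ s, z ≠ x → eval z I = 0 := by
        intro z hz hzx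
        rw [hIdef, map_mul, map_prod,
          Finset.prod_eq_zero (Finset.mem_erase.2 ⟨hzx, hz⟩) (FSM.eval_q_self z), mul_zero]
      have hint := hmom I hIdeg
      rw [FSM.integral_eq μ s hμs, FSM.integral_eq ν s hνs] at hint
      rw [Finset.sum_eq_single_of_mem x hx
            (fun z hz hzx => by rw [hIz z hz hzx, mul_zero]),
          Finset.sum_eq_single_of_mem x hx
            (fun z hz hzx => by rw [hIz z hz hzx, mul_zero]), hIx, mul_one, mul_one] at hint
      exact (ENNReal.toReal_eq_toReal_iff' (measure_ne_top μ _) (measure_ne_top ν _)).1 hint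
    exact FSM.meas_eq μ ν s hμs hνs hkey
end

section
/- Let 0 < a < b, d ∈ ℕ even with the rescaled Chebyshev polynomial T_{[a,b],d}(Λ) := T_d((2Λ − (b+a))/(b−a)), and let C := sup_{t∈[a,b]} (T_{[a,b],d}(t) + 1) = 2. Then the rational function g(Λ) := (2 − (T_{[a,b],d}(Λ) + 1)) / ((Λ − a)(b − Λ)) is a polynomial that is nonnegative on all of ℝ. -/
/-!
The substitution `Λ = ((b - a) s + (b + a)) / 2` turns `(Λ - a) (b - Λ)` into
`((b - a) / 2)² (1 - s²)`, so it suffices to treat `[a, b] = [-1, 1]`. There `1 - T_d` vanishes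
at `±1`, hence `1 - T_d = h · (1 - X²)`. For even `d`, `T_d ≤ 1` on `[-1, 1]` and `T_d ≥ 1`
outside it, so `1 - T_d` has the sign of `1 - s²`; thus `h ≥ 0` away from `±1`, and everywhere
by continuity.
-/

open Polynomial

/-- The Chebyshev polynomial of degree `k` rescaled to the interval `[a,b]`. -/
noncomputable def chebyOn (a b : ℝ) (k : ℕ) : Polynomial ℝ :=
  (Polynomial.Chebyshev.T ℝ k).comp
    (Polynomial.C (2 / (b - a)) * Polynomial.X - Polynomial.C ((b + a) / (b - a)))

namespace Polynomial

theorem eval_nonneg_of_eval_mul_mul_eval_nonneg {g q : ℝ[X]} (hq : q ≠ 0)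
    (h : ∀ x, 0 ≤ (g * q).eval x * q.eval x) (x : ℝ) : 0 ≤ g.eval x := by
  have hdense : Dense ((q.roots.toFinset : Set ℝ)ᶜ) :=
    (q.roots.toFinset.finite_toSet.countable).dense_compl ℝ
  have hsub : (q.roots.toFinset : Set ℝ)ᶜ ⊆ {x | 0 ≤ g.eval x} := by
    intro y hy
    have hqy : q.eval y ≠ 0 := by simpa [hq] using hy
    have hgq := h y
    rw [eval_mul, mul_assoc] at hgq
    exact nonneg_of_mul_nonneg_left hgq (mul_self_pos.2 hqy)
  exact (isClosed_le continuous_const g.continuous).closure_subset_iff.2 hsub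
    (hdense.closure_eq ▸ Set.mem_univ x)

namespace Chebyshev

theorem one_le_eval_T_real_of_even {n : ℤ} (hn : Even n) {x : ℝ} (hx : 1 ≤ |x|) :
    1 ≤ (T ℝ n).eval x := by
  rcases le_abs'.1 hx with hx | hx
  · simpa [Int.negOnePow_even n hn] using one_le_negOnePow_mul_eval_T_real n hx
  · exact one_le_eval_T_real n hx

theorem zero_le_one_sub_eval_T_real_mul_one_sub_sq {n : ℤ} (hn : Even n) (x : ℝ) :
    0 ≤ (1 - (T ℝ n).eval x) * (1 - x ^ 2) := by
  rcases le_total |x| 1 with hx | hx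
  · have hT := (eval_T_real_mem_Icc n (abs_le.1 hx)).2
    exact mul_nonneg (by linarith) (sub_nonneg.2 ((sq_le_one_iff_abs_le_one x).2 hx))
  · have hT := one_le_eval_T_real_of_even hn hx
    exact mul_nonneg_of_nonpos_of_nonpos (by linarith)
      (sub_nonpos.2 ((one_le_sq_iff_one_le_abs x).2 hx))

theorem exists_one_sub_T_real_eq_mul_one_sub_X_sq {n : ℤ} (hn : Even n) :
    ∃ h : ℝ[X], 1 - T ℝ n = h * (1 - X ^ 2) ∧ ∀ x, 0 ≤ h.eval x := by
  have hroot : ∀ x : ℝ, x ^ 2 = 1 → (1 - T ℝ n).IsRoot x := by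
    intro x hx
    rcases sq_eq_one_iff.1 hx with rfl | rfl <;>
      simp [Int.negOnePow_even n hn]
  have hcoprime : IsCoprime (X - Polynomial.C (1 : ℝ)) (X - Polynomial.C (-1)) :=
    isCoprime_X_sub_C_of_isUnit_sub (by norm_num)
  obtain ⟨q, hq⟩ := hcoprime.mul_dvd (dvd_iff_isRoot.2 (hroot 1 (by norm_num)))
    (dvd_iff_isRoot.2 (hroot (-1) (by norm_num)))
  have hfac : 1 - T ℝ n = -q * (1 - X ^ 2) := by rw [hq]; simp only [map_neg, map_one]; ring
  refine ⟨-q, hfac, eval_nonneg_of_eval_mul_mul_eval_nonneg (q := 1 - X ^ 2) ?_ fun x => ?_⟩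
  · exact fun h => by simpa using congrArg (eval 0) h
  · rw [← hfac]
    simpa using zero_le_one_sub_eval_T_real_mul_one_sub_sq hn x

end Chebyshev

end Polynomial

theorem one_sub_X_sq_comp_rescale {a b : ℝ} (hab : a ≠ b) :
    (1 - X ^ 2 : ℝ[X]).comp (C (2 / (b - a)) * X - C ((b + a) / (b - a))) =
      C (4 / (b - a) ^ 2) * ((X - C a) * (C b - X)) := by
  have hba : b - a ≠ 0 := sub_ne_zero.2 hab.symm
  refine Polynomial.funext fun t => ?_
  simp only [eval_comp, eval_sub, eval_one, eval_pow, eval_mul, eval_C, eval_X]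
  field_simp
  ring

theorem chebyshev_quotient_poly_nonneg_general (a b : ℝ) (hab : a < b)
    (d : ℕ) (hd : Even d) :
    ∃ g : Polynomial ℝ,
      Polynomial.C 2 - (chebyOn a b d + 1)
        = g * ((Polynomial.X - Polynomial.C a) * (Polynomial.C b - Polynomial.X)) ∧
      ∀ t : ℝ, 0 ≤ g.eval t := by
  set L : ℝ[X] := C (2 / (b - a)) * X - C ((b + a) / (b - a))
  obtain ⟨h, hfac, h_nonneg⟩ :=
    Chebyshev.exists_one_sub_T_real_eq_mul_one_sub_X_sq (hd.natCast : Even (d : ℤ))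
  refine ⟨C (4 / (b - a) ^ 2) * h.comp L, ?_, fun t => ?_⟩
  · calc C 2 - (chebyOn a b d + 1) = (1 - Chebyshev.T ℝ d).comp L := by
          rw [chebyOn, sub_comp, one_comp, map_ofNat]; ring
      _ = h.comp L * (1 - X ^ 2 : ℝ[X]).comp L := by rw [hfac, mul_comp]
      _ = _ := by rw [one_sub_X_sq_comp_rescale hab.ne]; ring
  · simpa using mul_nonneg (by positivity) (h_nonneg (L.eval t))

/-- For `0 < a < b` and even `d`, with `C = sup_{t∈[a,b]}(T_{[a,b],d}(t)+1) = 2`,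
the rational function `g(Λ) = (2 − (T_{[a,b],d}(Λ)+1)) / ((Λ−a)(b−Λ))` is a
polynomial that is nonnegative on all of `ℝ`. -/
theorem chebyshev_quotient_poly_nonneg (a b : ℝ) (ha : 0 < a) (hab : a < b)
    (d : ℕ) (hd : Even d)
    (hsup : IsGreatest ((fun t => (chebyOn a b d).eval t + 1) '' Set.Icc a b) 2) :
    ∃ g : Polynomial ℝ,
      Polynomial.C 2 - (chebyOn a b d + 1)
        = g * ((Polynomial.X - Polynomial.C a) * (Polynomial.C b - Polynomial.X)) ∧
      ∀ t : ℝ, 0 ≤ g.eval t :=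
  chebyshev_quotient_poly_nonneg_general a b hab d hd
end
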